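/- arXiv:1805.11860 — 4 statements merged into one kernel-verified Lean document; each statement's English description precedes it below -/
import Mathlib

section
/- Let N be a finite set of buses and E a set of edges (unordered pairs of distinct buses of N). Suppose real numbers v_i (for each bus i), W_{ij} and W_{ji} (for each edge {i,j}), δ_{i,ij} and δ_{j,ij} (for each edge {i,j}), and binary parameters α_{ij} ∈ {0,1} (for each edge {i,j}) satisfy: (1) v_i > 0 for every bus i; (2) W_{ij} ≥ 0 and W_{ij} = W_{ji} for every edge {i,j}; (3) δ_{i,ij} = 0 if α_{ij} = 0 and δ_{i,ij} = v_i if α_{ij} = 1, for every bus i incident to edge {i,j}; (4) for every edge {i,j} the 2×2 matrix R_{ij} = [[δ_{i,ij}, W_{ij}], [W_{ji}, δ_{j,ij}]] has rank at most 1 (equivalently, δ_{i,ij}·δ_{j,ij} − W_{ij}·W_{ji} = 0). Then there exists a unique pair of families (V, γ), with V_i a real number for each bus i and γ_{i,ij} a real number for each incident bus–edge pair, such that: V_i > 0 for all i; γ_{i,ij} = 0 if α_{ij} = 0 and γ_{i,ij} = V_i if α_{ij} = 1; and the lifting equations δ_{i,ij} = γ_{i,ij}², W_{ij} = γ_{i,ij}·γ_{j,ij},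 and v_i = V_i² hold. Moreover this unique pair is given explicitly by V_i = √(v_i) and γ_{i,ij} = √(δ_{i,ij}). -/
/-!
The lifted variables determine `(V, γ)` through square roots: `V i = √(v i)` because `V i > 0`,
and `γ i j = √(δ i j)` because the switching condition makes `γ i j` either `0` or `V i`, hence
nonnegative. Conversely these square roots solve the system; the only nontrivial equation is
`W i j = √(δ i j) √(δ j i)`, which follows from the rank-one condition `W i j ^ 2 = δ i j δ j i`
(using the symmetry of `W`) and `W i j ≥ 0`.
-/

/-- A pair of families `(V, γ)` is a solution of the original (un-lifted) system:
`V i > 0` for every bus, `γ i j` is `0` when line `{i,j}` is disconnected and equals `V i`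
when it is connected, and the lifting equations `δ = γ²`, `W = γᵢγⱼ`, `v = V²` hold. -/
def LiftedSol {ι : Type*} (E : ι → ι → Prop) (v : ι → ℝ) (W δ α : ι → ι → ℝ)
    (V : ι → ℝ) (γ : ι → ι → ℝ) : Prop :=
  (∀ i, 0 < V i) ∧
  (∀ i j, E i j → (α i j = 0 → γ i j = 0) ∧ (α i j = 1 → γ i j = V i)) ∧
  (∀ i j, E i j → δ i j = (γ i j) ^ 2) ∧
  (∀ i j, E i j → W i j = γ i j * γ j i) ∧
  (∀ i, v i = (V i) ^ 2)

lemma nonneg_of_switch {a d x : ℝ} (ha : a = 0 ∨ a = 1)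
    (hd : (a = 0 → d = 0) ∧ (a = 1 → d = x)) (hx : 0 ≤ x) : 0 ≤ d := by
  rcases ha with h | h
  · exact (hd.1 h).ge
  · exact (hd.2 h) ▸ hx

lemma Real.eq_sqrt_mul_sqrt_of_mul_self_eq {w a b : ℝ} (hw : 0 ≤ w) (ha : 0 ≤ a)
    (h : w * w = a * b) : w = √a * √b := by
  rw [← Real.sqrt_mul ha, ← h, Real.sqrt_mul_self hw]

section LiftedSol

variable {ι : Type*} {E : ι → ι → Prop} {v : ι → ℝ} {W δ α : ι → ι → ℝ}
  {V : ι → ℝ} {γ : ι → ι → ℝ}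

lemma LiftedSol.eq_sqrt_v (h : LiftedSol E v W δ α V γ) (i : ι) : V i = √(v i) := by
  rw [h.2.2.2.2 i, Real.sqrt_sq (h.1 i).le]

lemma LiftedSol.eq_sqrt_δ (hα01 : ∀ i j, E i j → α i j = 0 ∨ α i j = 1)
    (h : LiftedSol E v W δ α V γ) {i j : ι} (hij : E i j) : γ i j = √(δ i j) := by
  have hγ : 0 ≤ γ i j := nonneg_of_switch (hα01 i j hij) (h.2.1 i j hij) (h.1 i).le
  rw [h.2.2.1 i j hij, Real.sqrt_sq hγ]

lemma liftedSol_sqrt (hα01 : ∀ i j, E i j → α i j = 0 ∨ α i j = 1) (hv : ∀ i, 0 < v i)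
    (hW0 : ∀ i j, E i j → 0 ≤ W i j) (hWsymm : ∀ i j, E i j → W i j = W j i)
    (hδ : ∀ i j, E i j → (α i j = 0 → δ i j = 0) ∧ (α i j = 1 → δ i j = v i))
    (hrank : ∀ i j, E i j → δ i j * δ j i - W i j * W j i = 0) :
    LiftedSol E v W δ α (fun i => √(v i)) (fun i j => √(δ i j)) := by
  have hδ0 : ∀ i j, E i j → 0 ≤ δ i j := fun i j hij =>
    nonneg_of_switch (hα01 i j hij) (hδ i j hij) (hv i).le
  refine ⟨fun i => Real.sqrt_pos.mpr (hv i), fun i j hij => ⟨fun h0 => ?_, fun h1 => ?_⟩,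
    fun i j hij => (Real.sq_sqrt (hδ0 i j hij)).symm, fun i j hij => ?_,
    fun i => (Real.sq_sqrt (hv i).le).symm⟩
  · simp only [(hδ i j hij).1 h0, Real.sqrt_zero]
  · simp only [(hδ i j hij).2 h1]
  · refine Real.eq_sqrt_mul_sqrt_of_mul_self_eq (hW0 i j hij) (hδ0 i j hij) ?_
    calc W i j * W i j = W i j * W j i := by rw [← hWsymm i j hij]
      _ = δ i j * δ j i := by linarith [hrank i j hij]

end LiftedSol

theorem stmt_0_general {ι : Type*}
    (E : ι → ι → Prop)
    (v : ι → ℝ) (W δ α : ι → ι → ℝ)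
    (hα01 : ∀ i j, E i j → α i j = 0 ∨ α i j = 1)
    (hv : ∀ i, 0 < v i)
    (hW0 : ∀ i j, E i j → 0 ≤ W i j)
    (hWsymm : ∀ i j, E i j → W i j = W j i)
    (hδ : ∀ i j, E i j → (α i j = 0 → δ i j = 0) ∧ (α i j = 1 → δ i j = v i))
    (hrank : ∀ i j, E i j → δ i j * δ j i - W i j * W j i = 0) :
    -- existence: the explicit square-root pair is a solution
    LiftedSol E v W δ α (fun i => Real.sqrt (v i)) (fun i j => Real.sqrt (δ i j)) ∧
    -- uniqueness: any two solutions coincide (on all buses and all incident bus–edge pairs)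
    (∀ V₁ γ₁ V₂ γ₂, LiftedSol E v W δ α V₁ γ₁ → LiftedSol E v W δ α V₂ γ₂ →
      (∀ i, V₁ i = V₂ i) ∧ (∀ i j, E i j → γ₁ i j = γ₂ i j)) ∧
    -- moreover, every solution is given explicitly by the square roots
    (∀ V γ, LiftedSol E v W δ α V γ →
      (∀ i, V i = Real.sqrt (v i)) ∧ (∀ i j, E i j → γ i j = Real.sqrt (δ i j))) := by
  refine ⟨liftedSol_sqrt hα01 hv hW0 hWsymm hδ hrank, fun V₁ γ₁ V₂ γ₂ h₁ h₂ => ⟨fun i => ?_,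
    fun i j hij => ?_⟩, fun V γ h => ⟨h.eq_sqrt_v, fun i j => h.eq_sqrt_δ hα01⟩⟩
  · rw [h₁.eq_sqrt_v, h₂.eq_sqrt_v]
  · rw [h₁.eq_sqrt_δ hα01 hij, h₂.eq_sqrt_δ hα01 hij]

/-- Lemma 1 of the paper: existence, uniqueness, and the explicit square-root form
of the pair `(V, γ)` recovered from lifted variables `(v, δ, W)` satisfying the
positivity, symmetry, switching and rank-1 conditions. -/
theorem stmt_0 {ι : Type*} [Fintype ι]
    (E : ι → ι → Prop) (hEsymm : ∀ i j, E i j → E j i)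
    (hEirr : ∀ i j, E i j → i ≠ j)
    (v : ι → ℝ) (W δ α : ι → ι → ℝ)
    (hα01 : ∀ i j, E i j → α i j = 0 ∨ α i j = 1)
    (hαsymm : ∀ i j, E i j → α i j = α j i)
    (hv : ∀ i, 0 < v i)
    (hW0 : ∀ i j, E i j → 0 ≤ W i j)
    (hWsymm : ∀ i j, E i j → W i j = W j i)
    (hδ : ∀ i j, E i j → (α i j = 0 → δ i j = 0) ∧ (α i j = 1 → δ i j = v i))
    (hrank : ∀ i j, E i j → δ i j * δ j i - W i j * W j i = 0) :
    -- existence: the explicit square-root pair is a solution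
    LiftedSol E v W δ α (fun i => Real.sqrt (v i)) (fun i j => Real.sqrt (δ i j)) ∧
    -- uniqueness: any two solutions coincide (on all buses and all incident bus–edge pairs)
    (∀ V₁ γ₁ V₂ γ₂, LiftedSol E v W δ α V₁ γ₁ → LiftedSol E v W δ α V₂ γ₂ →
      (∀ i, V₁ i = V₂ i) ∧ (∀ i j, E i j → γ₁ i j = γ₂ i j)) ∧
    -- moreover, every solution is given explicitly by the square roots
    (∀ V γ, LiftedSol E v W δ α V γ →
      (∀ i, V i = Real.sqrt (v i)) ∧ (∀ i j, E i j → γ i j = Real.sqrt (δ i j))) :=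
  stmt_0_general E v W δ α hα01 hv hW0 hWsymm hδ hrank
end

section
/- Let D be a finite set of loads, M a positive integer, and level : D → {1, …, M} an assignment of a priority level to each load (smaller level number means higher priority). Let κ : {1, …, M} → ℝ assign a positive weighting factor to each priority level, and for each level r let φ_r denote the number of loads in D with level r. Assume that for every level m ∈ {1, …, M}, the weighting factors satisfy κ(m) > Σ_{r = m+1}^{M} φ_r · κ(r). Then for any level m₀ ∈ {1, …, M} and any two subsets S, T ⊆ D such that S contains at least one load of level m₀ and every load in T has level strictly greater than m₀, it holds that Σ_{i ∈ S} κ(level(i)) > Σ_{i ∈ T} κ(level(i)). Consequently, the survivability index Σ_{i ∈ S} κ(level(i)) / Σ_{i ∈ D} κ(level(i)) of any on/off configuration that switches on a load of some priority level is strictly greater than that of any configuration switching on only loads of strictly lower priority. -/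
/-!
A single load of level `m₀` in `S` already outweighs `T`: a configuration of loads of level
above `m₀` weighs at most as much as all such loads together, which is
`∑_{r > m₀} φ_r κ(r) < κ(m₀)`. Dividing by the positive total weight preserves the inequality.
-/

open Finset

section

variable {D ι : Type*} [Fintype D] [DecidableEq ι]

lemma sum_comp_le_sum_card_fiber_mul (f : D → ι) (w : ι → ℝ) (hw : ∀ i, 0 ≤ w (f i))
    {R : Finset ι} {T : Finset D} (hT : ∀ i ∈ T, f i ∈ R) :
    ∑ i ∈ T, w (f i) ≤ ∑ r ∈ R, ((univ.filter fun i => f i = r).card : ℝ) * w r := by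
  have hT_sub : T ⊆ univ.filter fun i => f i ∈ R := fun i hi => by simpa using hT i hi
  calc ∑ i ∈ T, w (f i)
      ≤ ∑ i ∈ univ.filter fun i => f i ∈ R, w (f i) :=
        sum_le_sum_of_subset_of_nonneg hT_sub fun i _ _ => hw i
    _ = ∑ r ∈ R, ∑ i ∈ univ.filter fun i => f i = r, w (f i) :=
        (sum_fiberwise_eq_sum_filter univ R f _).symm
    _ = ∑ r ∈ R, ((univ.filter fun i => f i = r).card : ℝ) * w r := by
        refine sum_congr rfl fun r _ => ?_
        rw [sum_congr rfl fun i hi => by rw [(mem_filter.mp hi).2], sum_const, nsmul_eq_mul]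

lemma sum_comp_lt_sum_comp_of_dominant (f : D → ι) (w : ι → ℝ) (hw : ∀ i, 0 ≤ w (f i))
    {m₀ : ι} {R : Finset ι}
    (hdom : ∑ r ∈ R, ((univ.filter fun i => f i = r).card : ℝ) * w r < w m₀)
    {S T : Finset D} (hS : ∃ i ∈ S, f i = m₀) (hT : ∀ i ∈ T, f i ∈ R) :
    ∑ i ∈ T, w (f i) < ∑ i ∈ S, w (f i) := by
  obtain ⟨i₀, hi₀S, rfl⟩ := hS
  calc ∑ i ∈ T, w (f i)
      ≤ ∑ r ∈ R, ((univ.filter fun i => f i = r).card : ℝ) * w r :=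
        sum_comp_le_sum_card_fiber_mul f w hw hT
    _ < w (f i₀) := hdom
    _ ≤ ∑ i ∈ S, w (f i) := single_le_sum (fun i _ => hw i) hi₀S

end

theorem stmt_3_general {D : Type*} [Fintype D] (M : ℕ)
    (level : D → ℕ) (hlevel : ∀ i, 1 ≤ level i ∧ level i ≤ M)
    (κ : ℕ → ℝ) (hκpos : ∀ m, 1 ≤ m → m ≤ M → 0 < κ m)
    (hweight : ∀ m, 1 ≤ m → m ≤ M →
      κ m > ∑ r ∈ Finset.Icc (m + 1) M,
        ((Finset.univ.filter fun i => level i = r).card : ℝ) * κ r) :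
    ∀ m₀, 1 ≤ m₀ → m₀ ≤ M → ∀ S T : Finset D,
      (∃ i ∈ S, level i = m₀) → (∀ i ∈ T, m₀ < level i) →
      (∑ i ∈ S, κ (level i) > ∑ i ∈ T, κ (level i)) ∧
      ((∑ i ∈ S, κ (level i)) / (∑ i : D, κ (level i)) >
        (∑ i ∈ T, κ (level i)) / (∑ i : D, κ (level i))) := by
  intro m₀ hm₀ hm₀M S T hS hT
  have hpos : ∀ i, 0 < κ (level i) := fun i => hκpos _ (hlevel i).1 (hlevel i).2
  have hlt : ∑ i ∈ T, κ (level i) < ∑ i ∈ S, κ (level i) :=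
    sum_comp_lt_sum_comp_of_dominant level κ (fun i => (hpos i).le) (hweight m₀ hm₀ hm₀M) hS
      fun i hi => mem_Icc.2 ⟨hT i hi, (hlevel i).2⟩
  obtain ⟨i₀, -, -⟩ := hS
  have htotal : 0 < ∑ i : D, κ (level i) := sum_pos (fun i _ => hpos i) ⟨i₀, mem_univ i₀⟩
  exact ⟨hlt, div_lt_div_of_pos_right hlt htotal⟩

/-- Priority property of the survivability index: if the weighting factor of each
priority level strictly exceeds the sum of the weighting factors of all loads of
strictly lower priority, then any load configuration containing a load of level `m₀`
has a strictly larger total weight (hence a strictly larger survivability index) than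
any configuration consisting only of loads of strictly lower priority. -/
theorem stmt_3 {D : Type*} [Fintype D] (M : ℕ) (hM : 0 < M)
    (level : D → ℕ) (hlevel : ∀ i, 1 ≤ level i ∧ level i ≤ M)
    (κ : ℕ → ℝ) (hκpos : ∀ m, 1 ≤ m → m ≤ M → 0 < κ m)
    (hweight : ∀ m, 1 ≤ m → m ≤ M →
      κ m > ∑ r ∈ Finset.Icc (m + 1) M,
        ((Finset.univ.filter fun i => level i = r).card : ℝ) * κ r) :
    ∀ m₀, 1 ≤ m₀ → m₀ ≤ M → ∀ S T : Finset D,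
      (∃ i ∈ S, level i = m₀) → (∀ i ∈ T, m₀ < level i) →
      (∑ i ∈ S, κ (level i) > ∑ i ∈ T, κ (level i)) ∧
      ((∑ i ∈ S, κ (level i)) / (∑ i : D, κ (level i)) >
        (∑ i ∈ T, κ (level i)) / (∑ i : D, κ (level i))) :=
  stmt_3_general M level hlevel κ hκpos hweight
end

section
/- Let y > 0 be a real number (a line admittance) and set z := 1/y. Let δ_i, δ_j, W be real numbers with δ_i > 0, δ_j ≥ 0, W ≥ 0, corresponding to a line {i, j} with symmetric lifted variables W_{ij} = W_{ji} = W. Define the branch-flow variables P_{ij} := (δ_i − W)·y, P_{ji} := (δ_j − W)·y, and l := y²·(δ_i − 2W + δ_j). Then: (i) P_{ij} + P_{ji} = z·l; (ii) δ_i − δ_j = z·(P_{ij} − P_{ji}); (iii) l·δ_i − P_{ij}² = y²·(δ_i·δ_j − W²). Consequently, the second-order cone inequality l ≥ P_{ij}²/δ_i holds if and only if δ_i·δ_j ≥ W², and equality l = P_{ij}²/δ_i holds if and only if δ_i·δ_j = W² (i.e., if and only if the matrix R_{ij} = [[δ_i, W], [W, δ_j]] has rank at most 1). -/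
/-! The identities are polynomial once `z = 1/y` is cleared, and (iii) exhibits `l δᵢ - Pᵢⱼ²` as
the determinant `δᵢδⱼ - W²` of `Rᵢⱼ` scaled by `y² > 0`; multiplying the cone constraint by
`δᵢ > 0` turns it into the sign of that determinant. -/

section BranchFlow

variable {K : Type*} [Field K]

theorem branchFlow_add (y δi δj W : K) (hy : y ≠ 0) :
    (δi - W) * y + (δj - W) * y = 1 / y * (y ^ 2 * (δi - 2 * W + δj)) := by
  field_simp
  ring

theorem branchFlow_sub (y δi δj W : K) (hy : y ≠ 0) :
    δi - δj = 1 / y * ((δi - W) * y - (δj - W) * y) := by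
  field_simp
  ring

theorem branchFlow_cone_gap (y δi δj W : K) :
    y ^ 2 * (δi - 2 * W + δj) * δi - ((δi - W) * y) ^ 2 = y ^ 2 * (δi * δj - W ^ 2) := by
  ring

end BranchFlow

section ConeConstraint

variable {K : Type*} [Field K] [LinearOrder K] [IsStrictOrderedRing K] {b c d e l : K}

theorem div_le_iff_nonneg_of_mul_sub_eq (hd : 0 < d) (hc : 0 < c) (h : l * d - b = c * e) :
    b / d ≤ l ↔ 0 ≤ e := by
  rw [div_le_iff₀ hd, ← sub_nonneg, h, mul_nonneg_iff_of_pos_left hc]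

theorem eq_div_iff_eq_zero_of_mul_sub_eq (hd : d ≠ 0) (hc : c ≠ 0) (h : l * d - b = c * e) :
    l = b / d ↔ e = 0 := by
  rw [eq_div_iff hd, ← sub_eq_zero, h, mul_eq_zero, or_iff_right hc]

end ConeConstraint

theorem stmt_4_general (y z δi δj W Pij Pji l : ℝ)
    (hy : 0 < y) (hz : z = 1 / y)
    (hδi : 0 < δi)
    (hPij : Pij = (δi - W) * y)
    (hPji : Pji = (δj - W) * y)
    (hl : l = y ^ 2 * (δi - 2 * W + δj)) :
    -- (i)
    Pij + Pji = z * l ∧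
    -- (ii)
    δi - δj = z * (Pij - Pji) ∧
    -- (iii)
    l * δi - Pij ^ 2 = y ^ 2 * (δi * δj - W ^ 2) ∧
    -- consequently:
    (l ≥ Pij ^ 2 / δi ↔ δi * δj ≥ W ^ 2) ∧
    (l = Pij ^ 2 / δi ↔ δi * δj = W ^ 2) := by
  subst hz hPij hPji hl
  have gap := branchFlow_cone_gap y δi δj W
  have hy2 : 0 < y ^ 2 := by positivity
  refine ⟨branchFlow_add y δi δj W hy.ne', branchFlow_sub y δi δj W hy.ne', gap, ?_, ?_⟩
  · rw [ge_iff_le, ge_iff_le, div_le_iff_nonneg_of_mul_sub_eq hδi hy2 gap, sub_nonneg]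
  · rw [eq_div_iff_eq_zero_of_mul_sub_eq hδi.ne' hy2.ne' gap, sub_eq_zero]

/-- Algebraic identities of the branch-flow change of variables `g` and the exact
correspondence between the rank-1 condition `δᵢδⱼ = W²` and equality in the
second-order cone constraint `l ≥ Pᵢⱼ²/δᵢ`. -/
theorem stmt_4 (y z δi δj W Pij Pji l : ℝ)
    (hy : 0 < y) (hz : z = 1 / y)
    (hδi : 0 < δi) (hδj : 0 ≤ δj) (hW : 0 ≤ W)
    (hPij : Pij = (δi - W) * y)
    (hPji : Pji = (δj - W) * y)
    (hl : l = y ^ 2 * (δi - 2 * W + δj)) :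
    -- (i)
    Pij + Pji = z * l ∧
    -- (ii)
    δi - δj = z * (Pij - Pji) ∧
    -- (iii)
    l * δi - Pij ^ 2 = y ^ 2 * (δi * δj - W ^ 2) ∧
    -- consequently:
    (l ≥ Pij ^ 2 / δi ↔ δi * δj ≥ W ^ 2) ∧
    (l = Pij ^ 2 / δi ↔ δi * δj = W ^ 2) :=
  stmt_4_general y z δi δj W Pij Pji l hy hz hδi hPij hPji hl
end

section
/- Let N be a finite set of buses and E a set of edges, and suppose for each edge {i,j}: α_{ij} ∈ {0,1}, and real numbers V_i and γ_{i,ij} satisfy V_i > 0 for all buses i, γ_{i,ij} = 0 if α_{ij} = 0, and γ_{i,ij} = V_i if α_{ij} = 1. Define the lifted variables v_i := V_i², δ_{i,ij} := γ_{i,ij}², and W_{ij} := γ_{i,ij}·γ_{j,ij}. Then the lifted variables satisfy: v_i > 0 for all buses i; W_{ij} ≥ 0 and W_{ij} = W_{ji} for every edge; δ_{i,ij} = 0 if α_{ij} = 0 and δ_{i,ij} = v_i if α_{ij} = 1; the 2×2 matrix R_{ij} = [[δ_{i,ij}, W_{ij}], [W_{ji}, δ_{j,ij}]] is positive semidefinite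 and has determinant zero (rank at most 1) for every edge; and whenever α_{ij} = 1, R_{ij} has rank exactly 1. Moreover, for every edge, γ_{i,ij}·(γ_{i,ij} − γ_{j,ij})·y_{ij} = (δ_{i,ij} − W_{ij})·y_{ij} and y_{ij}²·(γ_{i,ij} − γ_{j,ij})² = y_{ij}²·(δ_{i,ij} − W_{ij} − W_{ji} + δ_{j,ij}) for any real admittance y_{ij}. -/
/-!
Under the lifting, `R_{ij}` is the outer product of the vector `(γ_{i,ij}, γ_{j,ij})` with
itself, so it is positive semidefinite with determinant zero and rank at most one, and its rank is
exactly one as soon as that vector is nonzero, which happens on connected lines since there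
`γ_{i,ij} = V_i > 0`. Nonnegativity of `W` comes from `γ ≥ 0` on every edge; everything else is
ring arithmetic.
-/

open Matrix

theorem Matrix.rank_eq_zero_iff {K m n : Type*} [Field K] [Fintype n] [DecidableEq n]
    {A : Matrix m n K} : A.rank = 0 ↔ A = 0 := by
  rw [rank, Submodule.finrank_eq_zero, LinearMap.range_eq_bot, ← toLin'_apply',
    LinearEquiv.map_eq_zero_iff]

theorem Matrix.rank_vecMulVec_self {K n : Type*} [Field K] [Fintype n] [DecidableEq n]
    {a : n → K} (ha : a ≠ 0) : (vecMulVec a a).rank = 1 :=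
  le_antisymm (rank_vecMulVec_le a a) <|
    Nat.one_le_iff_ne_zero.2 <| rank_eq_zero_iff.not.2 <| vecMulVec_ne_zero ha ha

theorem Matrix.posSemidef_vecMulVec_self {R n : Type*} [Ring R] [PartialOrder R] [StarRing R]
    [TrivialStar R] [StarOrderedRing R] [Finite n] (a : n → R) : (vecMulVec a a).PosSemidef := by
  simpa using posSemidef_vecMulVec_self_star a

theorem Matrix.of_sq_mul_eq_vecMulVec {R : Type*} [CommMonoid R] (a b : R) :
    !![a ^ 2, a * b; b * a, b ^ 2] = vecMulVec ![a, b] ![a, b] := by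
  ext i j
  fin_cases i <;> fin_cases j <;> simp [vecMulVec_apply, sq]

theorem stmt_5_general {ι : Type*}
    (E : ι → ι → Prop) (hEsymm : ∀ i j, E i j → E j i)
    (α : ι → ι → ℝ)
    (hα01 : ∀ i j, E i j → α i j = 0 ∨ α i j = 1)
    (V : ι → ℝ) (γ : ι → ι → ℝ)
    (hV : ∀ i, 0 < V i)
    (hγ : ∀ i j, E i j → (α i j = 0 → γ i j = 0) ∧ (α i j = 1 → γ i j = V i))
    (v : ι → ℝ) (δ W : ι → ι → ℝ)
    (hv : ∀ i, v i = (V i) ^ 2)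
    (hδ : ∀ i j, δ i j = (γ i j) ^ 2)
    (hW : ∀ i j, W i j = γ i j * γ j i) :
    -- v i > 0 for all buses
    (∀ i, 0 < v i) ∧
    -- W is nonnegative and symmetric on edges
    (∀ i j, E i j → 0 ≤ W i j ∧ W i j = W j i) ∧
    -- δ switching conditions
    (∀ i j, E i j → (α i j = 0 → δ i j = 0) ∧ (α i j = 1 → δ i j = v i)) ∧
    -- R_{ij} is PSD with determinant zero (rank at most 1)
    (∀ i j, E i j →
      (!![δ i j, W i j; W j i, δ j i] : Matrix (Fin 2) (Fin 2) ℝ).PosSemidef ∧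
      (!![δ i j, W i j; W j i, δ j i] : Matrix (Fin 2) (Fin 2) ℝ).det = 0 ∧
      (!![δ i j, W i j; W j i, δ j i] : Matrix (Fin 2) (Fin 2) ℝ).rank ≤ 1) ∧
    -- on connected lines, R_{ij} has rank exactly 1
    (∀ i j, E i j → α i j = 1 →
      (!![δ i j, W i j; W j i, δ j i] : Matrix (Fin 2) (Fin 2) ℝ).rank = 1) ∧
    -- lifted power-flow and current expressions
    (∀ i j, E i j → ∀ y : ℝ,
      γ i j * (γ i j - γ j i) * y = (δ i j - W i j) * y ∧
      y ^ 2 * (γ i j - γ j i) ^ 2 = y ^ 2 * (δ i j - W i j - W j i + δ j i)) := by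
  obtain rfl : v = fun i ↦ V i ^ 2 := funext hv
  obtain rfl : δ = fun i j ↦ γ i j ^ 2 := funext₂ hδ
  obtain rfl : W = fun i j ↦ γ i j * γ j i := funext₂ hW
  have hγ_nonneg (i j : ι) (hij : E i j) : 0 ≤ γ i j := by
    rcases hα01 i j hij with hoff | hon
    · exact ((hγ i j hij).1 hoff).ge
    · exact ((hγ i j hij).2 hon).symm ▸ (hV i).le
  simp only [of_sq_mul_eq_vecMulVec]
  refine ⟨fun i ↦ pow_pos (hV i) 2,
    fun i j hij ↦ ⟨mul_nonneg (hγ_nonneg i j hij) (hγ_nonneg j i (hEsymm i j hij)), mul_comm _ _⟩,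
    fun i j hij ↦ ⟨fun hoff ↦ by simp [(hγ i j hij).1 hoff], fun hon ↦ by simp [(hγ i j hij).2 hon]⟩,
    fun i j _ ↦ ⟨posSemidef_vecMulVec_self _, det_vecMulVec _ _, rank_vecMulVec_le _ _⟩,
    fun i j hij hon ↦ rank_vecMulVec_self ?_, fun i j _ y ↦ ⟨by ring, by ring⟩⟩
  have hγ_pos : γ i j ≠ 0 := ((hγ i j hij).2 hon).symm ▸ (hV i).ne'
  exact fun h ↦ hγ_pos (congrFun h 0)

/-- Forward direction of the equivalence between the non-convex problem S1 and the
lifted problem SE1: the lifted variables `v = V²`, `δ = γ²`, `W = γᵢγⱼ` obtained from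
a feasible point of S1 satisfy the lifted constraints, the matrices `R_{ij}` are
positive semidefinite of rank at most 1 (rank exactly 1 on connected lines), and the
power-flow and current expressions coincide under the lifting. -/
theorem stmt_5 {ι : Type*} [Fintype ι]
    (E : ι → ι → Prop) (hEsymm : ∀ i j, E i j → E j i)
    (hEirr : ∀ i j, E i j → i ≠ j)
    (α : ι → ι → ℝ)
    (hα01 : ∀ i j, E i j → α i j = 0 ∨ α i j = 1)
    (hαsymm : ∀ i j, E i j → α i j = α j i)
    (V : ι → ℝ) (γ : ι → ι → ℝ)
    (hV : ∀ i, 0 < V i)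
    (hγ : ∀ i j, E i j → (α i j = 0 → γ i j = 0) ∧ (α i j = 1 → γ i j = V i))
    (v : ι → ℝ) (δ W : ι → ι → ℝ)
    (hv : ∀ i, v i = (V i) ^ 2)
    (hδ : ∀ i j, δ i j = (γ i j) ^ 2)
    (hW : ∀ i j, W i j = γ i j * γ j i) :
    -- v i > 0 for all buses
    (∀ i, 0 < v i) ∧
    -- W is nonnegative and symmetric on edges
    (∀ i j, E i j → 0 ≤ W i j ∧ W i j = W j i) ∧
    -- δ switching conditions
    (∀ i j, E i j → (α i j = 0 → δ i j = 0) ∧ (α i j = 1 → δ i j = v i)) ∧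
    -- R_{ij} is PSD with determinant zero (rank at most 1)
    (∀ i j, E i j →
      (!![δ i j, W i j; W j i, δ j i] : Matrix (Fin 2) (Fin 2) ℝ).PosSemidef ∧
      (!![δ i j, W i j; W j i, δ j i] : Matrix (Fin 2) (Fin 2) ℝ).det = 0 ∧
      (!![δ i j, W i j; W j i, δ j i] : Matrix (Fin 2) (Fin 2) ℝ).rank ≤ 1) ∧
    -- on connected lines, R_{ij} has rank exactly 1
    (∀ i j, E i j → α i j = 1 →
      (!![δ i j, W i j; W j i, δ j i] : Matrix (Fin 2) (Fin 2) ℝ).rank = 1) ∧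
    -- lifted power-flow and current expressions
    (∀ i j, E i j → ∀ y : ℝ,
      γ i j * (γ i j - γ j i) * y = (δ i j - W i j) * y ∧
      y ^ 2 * (γ i j - γ j i) ^ 2 = y ^ 2 * (δ i j - W i j - W j i + δ j i)) :=
  stmt_5_general E hEsymm α hα01 V γ hV hγ v δ W hv hδ hW
end
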